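/- Let a, b ∈ ℚ with a ≠ 0 and b ≠ 0, and let d(X) = X⁴ + ((8a − 2)/b²)·X² + (32a/b³)·X + ((16a² + 24a + 1)/b⁴) ∈ ℚ[X]. If d is squarefree, then d is Pellian over ℚ[X]: there exist f, g ∈ ℚ[X] with g ≠ 0 and f² − d·g² = 1. -/

import Mathlib

/-!
The polynomials `f₁ = b⁴X⁴ - 2b³X³ + 8ab²X² + (8a + 2)bX + 16a² - 16a - 1` and
`g₁ = b⁴X² - 2b³X + (4a + 1)b²` satisfy `f₁² - d g₁² = -1024a³`, a nonzero constant.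
Squaring `f₁ + g₁√d` in `ℚ[X][√d]` gives `(f₁² + d g₁²) + 2f₁g₁√d` of norm `(1024a³)²`,
and dividing by that constant yields a solution of the Pell equation.
-/

open Polynomial

namespace Polynomial

variable {K : Type*} [Field K]

def IsPellian (d : K[X]) : Prop :=
  ∃ f g : K[X], g ≠ 0 ∧ f ^ 2 - d * g ^ 2 = 1

theorem IsPellian.of_sq_sub_mul_sq_eq_C {d f g : K[X]} {k : K} (h2 : (2 : K) ≠ 0)
    (hk : k ≠ 0) (hf : f ≠ 0) (hg : g ≠ 0) (h : f ^ 2 - d * g ^ 2 = C k) : IsPellian d := by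
  refine ⟨C k⁻¹ * (f ^ 2 + d * g ^ 2), C k⁻¹ * (2 * f * g), ?_, ?_⟩
  · have h2' : (2 : K[X]) ≠ 0 := by simpa [← C_ofNat] using h2
    exact mul_ne_zero (C_ne_zero.mpr (inv_ne_zero hk)) (mul_ne_zero (mul_ne_zero h2' hf) hg)
  · calc (C k⁻¹ * (f ^ 2 + d * g ^ 2)) ^ 2 - d * (C k⁻¹ * (2 * f * g)) ^ 2
        = (C k⁻¹ * (f ^ 2 - d * g ^ 2)) ^ 2 := by ring
      _ = 1 := by rw [h, ← C_mul, inv_mul_cancel₀ hk, C_1, one_pow]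

end Polynomial

noncomputable section

namespace TorsionOrderFour

def quartic (a b : ℚ) : ℚ[X] :=
  X ^ 4 + C ((8 * a - 2) / b ^ 2) * X ^ 2 + C (32 * a / b ^ 3) * X
    + C ((16 * a ^ 2 + 24 * a + 1) / b ^ 4)

def constNormF (a b : ℚ) : ℚ[X] :=
  C (b ^ 4) * X ^ 4 - C (2 * b ^ 3) * X ^ 3 + C (8 * a * b ^ 2) * X ^ 2
    + C ((8 * a + 2) * b) * X + C (16 * a ^ 2 - 16 * a - 1)

def constNormG (a b : ℚ) : ℚ[X] :=
  C (b ^ 4) * X ^ 2 - C (2 * b ^ 3) * X + C ((4 * a + 1) * b ^ 2)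

theorem constNormF_coeff_four (a b : ℚ) : (constNormF a b).coeff 4 = b ^ 4 := by
  simp only [constNormF, coeff_add, coeff_sub, coeff_C_mul, coeff_X_pow, coeff_X, coeff_C]
  norm_num

theorem constNormG_coeff_two (a b : ℚ) : (constNormG a b).coeff 2 = b ^ 4 := by
  simp only [constNormG, coeff_add, coeff_sub, coeff_C_mul, coeff_X_pow, coeff_X, coeff_C]
  norm_num

theorem constNormF_ne_zero {a b : ℚ} (hb : b ≠ 0) : constNormF a b ≠ 0 := fun h =>
  pow_ne_zero 4 hb (by rw [← constNormF_coeff_four a b, h, coeff_zero])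

theorem constNormG_ne_zero {a b : ℚ} (hb : b ≠ 0) : constNormG a b ≠ 0 := fun h =>
  pow_ne_zero 4 hb (by rw [← constNormG_coeff_two a b, h, coeff_zero])

theorem constNormF_sq_sub_quartic_mul_constNormG_sq {a b : ℚ} (hb : b ≠ 0) :
    constNormF a b ^ 2 - quartic a b * constNormG a b ^ 2 = C (-1024 * a ^ 3) := by
  apply Polynomial.funext
  intro r
  simp only [constNormF, constNormG, quartic, eval_add, eval_sub, eval_mul, eval_pow, eval_C,
    eval_X]
  field_simp
  ring

theorem isPellian_quartic {a b : ℚ} (ha : a ≠ 0) (hb : b ≠ 0) : IsPellian (quartic a b) :=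
  IsPellian.of_sq_sub_mul_sq_eq_C two_ne_zero (by simp [ha]) (constNormF_ne_zero hb)
    (constNormG_ne_zero hb) (constNormF_sq_sub_quartic_mul_constNormG_sq hb)

end TorsionOrderFour

end

theorem torsion_order_four_family_pellian_general (a b : ℚ) (ha : a ≠ 0) (hb : b ≠ 0)
    (d : Polynomial ℚ)
    (hd : d = X ^ 4 + C ((8 * a - 2) / b ^ 2) * X ^ 2 + C (32 * a / b ^ 3) * X
        + C ((16 * a ^ 2 + 24 * a + 1) / b ^ 4)) :
    ∃ f g : Polynomial ℚ, g ≠ 0 ∧ f ^ 2 - d * g ^ 2 = 1 := by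
  subst hd
  exact TorsionOrderFour.isPellian_quartic ha hb

theorem torsion_order_four_family_pellian (a b : ℚ) (ha : a ≠ 0) (hb : b ≠ 0)
    (d : Polynomial ℚ)
    (hd : d = X ^ 4 + C ((8 * a - 2) / b ^ 2) * X ^ 2 + C (32 * a / b ^ 3) * X
        + C ((16 * a ^ 2 + 24 * a + 1) / b ^ 4))
    (hsf : Squarefree d) :
    ∃ f g : Polynomial ℚ, g ≠ 0 ∧ f ^ 2 - d * g ^ 2 = 1 :=
  torsion_order_four_family_pellian_general a b ha hb d hd
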